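/- arXiv:0907.1376 — 3 statements merged into one kernel-verified Lean document; each statement's English description precedes it below -/
import Mathlib

section
/- Let (T⊛, T⊚) be a latin bitrade with bijections β₁, β₂, β₃ : T⊚ → T⊛ and permutations τ₁ = β₂⁻¹β₃, τ₂ = β₃⁻¹β₁, τ₃ = β₁⁻¹β₂ of T⊛ (composition left to right). Then τ₁τ₂τ₃ = 1 and each τ_i is fixed-point-free on T⊛ (i.e., conditions (T1) and (T3) hold). -/
/-- `Agree2 r a b` says that the triples `a` and `b` agree in the two
coordinates other than `r` (coordinates indexed by `Fin 3`). -/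
def Agree2 {A₁ A₂ A₃ : Type*} (r : Fin 3) (a b : A₁ × A₂ × A₃) : Prop :=
  if r = 0 then a.2.1 = b.2.1 ∧ a.2.2 = b.2.2
  else if r = 1 then a.1 = b.1 ∧ a.2.2 = b.2.2
  else a.1 = b.1 ∧ a.2.1 = b.2.1

/-- `CoordNe r a b` says that the triples `a` and `b` differ in coordinate `r`. -/
def CoordNe {A₁ A₂ A₃ : Type*} (r : Fin 3) (a b : A₁ × A₂ × A₃) : Prop :=
  if r = 0 then a.1 ≠ b.1
  else if r = 1 then a.2.1 ≠ b.2.1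
  else a.2.2 ≠ b.2.2

/-- A partial latin square: any two triples agreeing in two coordinates are equal. -/
def IsPLS {A₁ A₂ A₃ : Type*} (T : Set (A₁ × A₂ × A₃)) : Prop :=
  ∀ a ∈ T, ∀ b ∈ T, ∀ r : Fin 3, Agree2 r a b → a = b

/-- A latin bitrade `(T₁, T₂)`: two disjoint partial latin squares such that each triple
of one is matched, for each pair of coordinates, by a unique triple of the other
agreeing in those two coordinates. -/
structure IsBitrade {A₁ A₂ A₃ : Type*} (T₁ T₂ : Set (A₁ × A₂ × A₃)) : Prop where
  pls₁ : IsPLS T₁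
  pls₂ : IsPLS T₂
  disj : T₁ ∩ T₂ = ∅
  r2 : ∀ a ∈ T₁, ∀ r : Fin 3, ∃! b, b ∈ T₂ ∧ Agree2 r a b
  r3 : ∀ a ∈ T₂, ∀ r : Fin 3, ∃! b, b ∈ T₁ ∧ Agree2 r a b

theorem Agree2.eq_of_ne {A₁ A₂ A₃ : Type*} {r s : Fin 3} (hrs : r ≠ s)
    {a b : A₁ × A₂ × A₃} (hr : Agree2 r a b) (hs : Agree2 s a b) : a = b := by
  fin_cases r <;> fin_cases s <;> simp_all [Agree2, Prod.ext_iff]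

theorem Equiv.trans_cycle_eq_refl {α β : Type*} (e₀ e₁ e₂ : α ≃ β) :
    ((e₁.symm.trans e₂).trans (e₂.symm.trans e₀)).trans (e₀.symm.trans e₁) = Equiv.refl β := by
  ext x
  simp

/-- A fixed point `x` would agree with `e⁻¹ x` in all three coordinates, so it would lie in
`T₁ ∩ T₂`. -/
theorem symm_trans_apply_ne_self_of_disjoint {A₁ A₂ A₃ : Type*} {T₁ T₂ : Set (A₁ × A₂ × A₃)}
    (hdisj : T₁ ∩ T₂ = ∅) {r s : Fin 3} (hrs : r ≠ s) (e f : T₂ ≃ T₁)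
    (he : ∀ a : T₂, Agree2 r a.val (e a).val) (hf : ∀ a : T₂, Agree2 s a.val (f a).val)
    (x : T₁) : (e.symm.trans f) x ≠ x := by
  intro (hx : f (e.symm x) = x)
  have hr : Agree2 r (e.symm x).val x.val := by simpa using he (e.symm x)
  have hs : Agree2 s (e.symm x).val x.val := by simpa only [hx] using hf (e.symm x)
  have hmem : x.val ∈ T₁ ∩ T₂ := ⟨x.2, Agree2.eq_of_ne hrs hr hs ▸ (e.symm x).2⟩
  simp [hdisj] at hmem

theorem tau_T1_T3_general {A₁ A₂ A₃ : Type*}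
    {T₁ T₂ : Set (A₁ × A₂ × A₃)} (h : IsBitrade T₁ T₂)
    (β : Fin 3 → (T₂ ≃ T₁))
    (hβ : ∀ r : Fin 3, ∀ a : T₂, Agree2 r a.val ((β r) a).val) :
    let τ₁ := (β 1).symm.trans (β 2)
    let τ₂ := (β 2).symm.trans (β 0)
    let τ₃ := (β 0).symm.trans (β 1)
    ((τ₁.trans τ₂).trans τ₃ = Equiv.refl T₁) ∧
    (∀ x : T₁, τ₁ x ≠ x) ∧ (∀ x : T₁, τ₂ x ≠ x) ∧ (∀ x : T₁, τ₃ x ≠ x) := by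
  have fixedPointFree {r s : Fin 3} (hrs : r ≠ s) :=
    symm_trans_apply_ne_self_of_disjoint h.disj hrs (β r) (β s) (hβ r) (hβ s)
  exact ⟨Equiv.trans_cycle_eq_refl (β 0) (β 1) (β 2), fixedPointFree (by decide),
    fixedPointFree (by decide), fixedPointFree (by decide)⟩

/-- Given a latin bitrade with its bijections `β₁, β₂, β₃ : T⊚ → T⊛`
(where `β r` agrees with the identity in both coordinates other than `r`), the
permutations `τ₁ = β₂⁻¹β₃`, `τ₂ = β₃⁻¹β₁`, `τ₃ = β₁⁻¹β₂` of `T⊛` (composed left to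
right, i.e. via `Equiv.trans`) satisfy (T1) `τ₁τ₂τ₃ = 1` and (T3) each `τ_i` is
fixed-point-free. -/
theorem tau_T1_T3 {A₁ A₂ A₃ : Type*} [Finite A₁] [Finite A₂] [Finite A₃]
    {T₁ T₂ : Set (A₁ × A₂ × A₃)} (h : IsBitrade T₁ T₂)
    (β : Fin 3 → (T₂ ≃ T₁))
    (hβ : ∀ r : Fin 3, ∀ a : T₂, Agree2 r a.val ((β r) a).val) :
    let τ₁ := (β 1).symm.trans (β 2)
    let τ₂ := (β 2).symm.trans (β 0)
    let τ₃ := (β 0).symm.trans (β 1)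
    ((τ₁.trans τ₂).trans τ₃ = Equiv.refl T₁) ∧
    (∀ x : T₁, τ₁ x ≠ x) ∧ (∀ x : T₁, τ₂ x ≠ x) ∧ (∀ x : T₁, τ₃ x ≠ x) :=
  tau_T1_T3_general h β hβ
end

section
/- Let (T⊛, T⊚) be a latin bitrade with permutations τ₁ = β₂⁻¹β₃, τ₂ = β₃⁻¹β₁, τ₃ = β₁⁻¹β₂ of T⊛. Then condition (T2) holds: for all 1 ≤ i < j ≤ 3 and distinct points x ≠ y of T⊛, it is not the case that x and y lie in the same cycle of τ_i and also in the same cycle of τ_j. (Equivalently, any cycle of τ_i and any cycle of τ_j move at most one common point.) -/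
theorem Equiv.Perm.SameCycle.rel_of_forall_rel_apply {α : Type*} {f : Equiv.Perm α}
    {R : α → α → Prop} (hR : Equivalence R) (hf : ∀ x, R (f x) x) {x y : α}
    (h : f.SameCycle x y) : R x y := by
  obtain ⟨n, rfl⟩ := h
  induction n using Int.induction_on with
  | zero => exact hR.refl x
  | succ k ih =>
    rw [add_comm, zpow_add, zpow_one, Equiv.Perm.mul_apply]
    exact hR.trans ih (hR.symm (hf _))
  | pred k ih =>
    rw [sub_eq_add_neg, add_comm, zpow_add, zpow_neg_one, Equiv.Perm.mul_apply]
    refine hR.trans ih ?_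
    simpa using hf ((f⁻¹) ((f ^ (-(k : ℤ))) x))

section Coordinates

variable {A₁ A₂ A₃ : Type*}

theorem equivalence_not_coordNe (r : Fin 3) :
    Equivalence (fun a b : A₁ × A₂ × A₃ => ¬CoordNe r a b) := by
  fin_cases r <;>
  exact ⟨fun _ => by simp [CoordNe], fun h => by simp_all [CoordNe],
    fun h₁ h₂ => by simp_all [CoordNe]⟩

theorem not_coordNe_of_agree2 {r t : Fin 3} {a b : A₁ × A₂ × A₃} (h : Agree2 r a b)
    (ht : t ≠ r) : ¬CoordNe t a b := by
  fin_cases r <;> fin_cases t <;> simp_all [Agree2, CoordNe]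

theorem agree2_of_forall_not_coordNe {r : Fin 3} {a b : A₁ × A₂ × A₃}
    (h : ∀ t ≠ r, ¬CoordNe t a b) : Agree2 r a b := by
  have h0 := h 0; have h1 := h 1; have h2 := h 2
  fin_cases r <;> simp_all [Agree2, CoordNe]

theorem not_coordNe_symm_trans_apply {T₁ T₂ : Set (A₁ × A₂ × A₃)} {s t r : Fin 3}
    {e e' : T₂ ≃ T₁} (he : ∀ a : T₂, Agree2 s a.val (e a).val)
    (he' : ∀ a : T₂, Agree2 t a.val (e' a).val) (hs : r ≠ s) (ht : r ≠ t) (x : T₁) :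
    ¬CoordNe r (e.symm.trans e' x).val x.val := by
  have hx := not_coordNe_of_agree2 (he (e.symm x)) hs
  rw [e.apply_symm_apply] at hx
  exact (equivalence_not_coordNe r).trans
    ((equivalence_not_coordNe r).symm (not_coordNe_of_agree2 (he' _) ht)) hx

end Coordinates

theorem tau_T2_general {A₁ A₂ A₃ : Type*}
    {T₁ T₂ : Set (A₁ × A₂ × A₃)} (h : IsBitrade T₁ T₂)
    (β : Fin 3 → (T₂ ≃ T₁))
    (hβ : ∀ r : Fin 3, ∀ a : T₂, Agree2 r a.val ((β r) a).val)
    (τ : Fin 3 → Equiv.Perm T₁)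
    (hτ₁ : τ 0 = (β 1).symm.trans (β 2))
    (hτ₂ : τ 1 = (β 2).symm.trans (β 0))
    (hτ₃ : τ 2 = (β 0).symm.trans (β 1)) :
    ∀ i j : Fin 3, i < j → ∀ x y : T₁, x ≠ y →
      ¬((τ i).SameCycle x y ∧ (τ j).SameCycle x y) := by
  have hτ : ∀ r, τ r = (β (r + 1)).symm.trans (β (r + 2)) := by
    intro r; fin_cases r <;> assumption
  have hτ_coord : ∀ r x, ¬CoordNe r (τ r x).val x.val := fun r x => by
    rw [hτ r]
    exact not_coordNe_symm_trans_apply (hβ _) (hβ _) (by fin_cases r <;> decide)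
      (by fin_cases r <;> decide) x
  have same_coord : ∀ r {x y}, (τ r).SameCycle x y → ¬CoordNe r x.val y.val := fun r _ _ hxy =>
    hxy.rel_of_forall_rel_apply (R := fun a b => ¬CoordNe r a.val b.val)
      ((equivalence_not_coordNe r).comap _) (hτ_coord r)
  have hother : ∀ i j : Fin 3, i < j → ∀ t ≠ -(i + j), t = i ∨ t = j := by decide
  rintro i j hij x y hxy ⟨hi, hj⟩
  refine hxy (Subtype.ext (h.pls₁ _ x.2 _ y.2 (-(i + j)) (agree2_of_forall_not_coordNe ?_)))
  intro t ht
  rcases hother i j hij t ht with rfl | rfl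
  exacts [same_coord t hi, same_coord t hj]

/-- Given a latin bitrade with its bijections `β₁, β₂, β₃ : T⊚ → T⊛`,
the permutations `τ₁ = β₂⁻¹β₃`, `τ₂ = β₃⁻¹β₁`, `τ₃ = β₁⁻¹β₂` of `T⊛` (composed left to
right) satisfy (T2): for `i < j`, no two distinct points lie simultaneously in one
cycle of `τ_i` and in one cycle of `τ_j`. -/
theorem tau_T2 {A₁ A₂ A₃ : Type*} [Finite A₁] [Finite A₂] [Finite A₃]
    {T₁ T₂ : Set (A₁ × A₂ × A₃)} (h : IsBitrade T₁ T₂)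
    (β : Fin 3 → (T₂ ≃ T₁))
    (hβ : ∀ r : Fin 3, ∀ a : T₂, Agree2 r a.val ((β r) a).val)
    (τ : Fin 3 → Equiv.Perm T₁)
    (hτ₁ : τ 0 = (β 1).symm.trans (β 2))
    (hτ₂ : τ 1 = (β 2).symm.trans (β 0))
    (hτ₃ : τ 2 = (β 0).symm.trans (β 1)) :
    ∀ i j : Fin 3, i < j → ∀ x y : T₁, x ≠ y →
      ¬((τ i).SameCycle x y ∧ (τ j).SameCycle x y) :=
  tau_T2_general h β hβ τ hτ₁ hτ₂ hτ₃
end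

section
/- Let τ₁, τ₂, τ₃ be permutations of a finite set Γ = mov(τ₁) ∪ mov(τ₂) ∪ mov(τ₃) satisfying (T1), (T2), (T3). For i = 1,2,3 let A_i be the set of cycles of τ_i, and define T⊛ = {(ρ₁,ρ₂,ρ₃) ∈ A₁×A₂×A₃ : some point of Γ is moved by all three of ρ₁, ρ₂, ρ₃} and T⊚ = {(ρ₁,ρ₂,ρ₃) ∈ A₁×A₂×A₃ : there exist distinct points x, x', x'' of Γ with xρ₁ = x', x'ρ₂ = x'', x''ρ₃ = x}. Then (T⊛, T⊚) is a latin bitrade, i.e., T⊛ and T⊚ are partial latin squares satisfying (R1), (R2), (R3). -/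
/-- The set of cycles of a permutation, viewed as the quotient of the underlying set
by the same-cycle relation. -/
abbrev CycleOf {Γ : Type*} (σ : Equiv.Perm Γ) := Quotient (Equiv.Perm.SameCycle.setoid σ)

/-- The partial latin square `T⊛` of Construction: triples of cycles
`(ρ₁, ρ₂, ρ₃)` (one of each `τ_i`) through a common point. -/
def Tstar {Γ : Type*} (τ : Fin 3 → Equiv.Perm Γ) :
    Set (CycleOf (τ 0) × CycleOf (τ 1) × CycleOf (τ 2)) :=
  {ρ | ∃ x : Γ, Quotient.mk _ x = ρ.1 ∧ Quotient.mk _ x = ρ.2.1 ∧ Quotient.mk _ x = ρ.2.2}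

/-- The partial latin square `T⊚` of Construction: triples of cycles
`(ρ₁, ρ₂, ρ₃)` through distinct points `x, x', x''` with
`xτ₁ = x'`, `x'τ₂ = x''`, `x''τ₃ = x`. -/
def Tcirc {Γ : Type*} (τ : Fin 3 → Equiv.Perm Γ) :
    Set (CycleOf (τ 0) × CycleOf (τ 1) × CycleOf (τ 2)) :=
  {ρ | ∃ x x' x'' : Γ, x ≠ x' ∧ x' ≠ x'' ∧ x ≠ x'' ∧
    τ 0 x = x' ∧ τ 1 x' = x'' ∧ τ 2 x'' = x ∧
    Quotient.mk _ x = ρ.1 ∧ Quotient.mk _ x' = ρ.2.1 ∧ Quotient.mk _ x'' = ρ.2.2}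


/-!
A triple of `T⊛` is the triple of cycles through a single point, and a triple of `T⊚` the
triple of cycles through the corners `x, xτ₁, xτ₁τ₂` of a triangle. By (T2) a point is
determined by any two of the cycles through it, so `T⊛` is a partial latin square. The triangle
at `x` shares, for each coordinate `r`, the two other cycles with the point-triple at one of its
corners, and the corner is a bijective function of `x`: this yields (R2) and (R3), and transports
the latin property from `T⊛` to `T⊚`. A triple common to both would make its point equal to
two distinct corners of its triangle, against (T3).
-/

open Function Equiv

section LatinSquare

variable {A₁ A₂ A₃ : Type*} {r : Fin 3} {a b c : A₁ × A₂ × A₃}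

theorem Agree2.symm (h : Agree2 r a b) : Agree2 r b a := by
  fin_cases r <;> exact ⟨h.1.symm, h.2.symm⟩

theorem Agree2.trans (hab : Agree2 r a b) (hbc : Agree2 r b c) : Agree2 r a c := by
  fin_cases r <;> exact ⟨hab.1.trans hbc.1, hab.2.trans hbc.2⟩

theorem isPLS_range {ι : Type*} {f : ι → A₁ × A₂ × A₃}
    (hf : ∀ r x y, Agree2 r (f x) (f y) → f x = f y) : IsPLS (Set.range f) := by
  rintro _ ⟨x, rfl⟩ _ ⟨y, rfl⟩ r h
  exact hf r x y h

theorem IsPLS.existsUnique_of_exists {T : Set (A₁ × A₂ × A₃)} (hT : IsPLS T)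
    (h : ∃ b ∈ T, Agree2 r a b) : ∃! b, b ∈ T ∧ Agree2 r a b := by
  obtain ⟨b, hbT, hab⟩ := h
  exact ⟨b, ⟨hbT, hab⟩, fun c ⟨hcT, hac⟩ => hT c hcT b hbT r (hac.symm.trans hab)⟩

end LatinSquare

section Construction

variable {Γ : Type*} (τ : Fin 3 → Perm Γ)

def starPt (x : Γ) : CycleOf (τ 0) × CycleOf (τ 1) × CycleOf (τ 2) :=
  (Quotient.mk _ x, Quotient.mk _ x, Quotient.mk _ x)

def circPt (x : Γ) : CycleOf (τ 0) × CycleOf (τ 1) × CycleOf (τ 2) :=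
  (Quotient.mk _ x, Quotient.mk _ (τ 0 x), Quotient.mk _ (τ 1 (τ 0 x)))

/-- The corner of the triangle `circPt τ x` lying on its two cycles other than the `r`-th. -/
def circCorner : Fin 3 → Γ → Γ :=
  ![τ 1 ∘ τ 0, id, τ 0]

theorem Tstar_eq_range : Tstar τ = Set.range (starPt τ) := by
  ext ρ
  constructor
  · rintro ⟨x, h₀, h₁, h₂⟩
    exact ⟨x, Prod.ext h₀ (Prod.ext h₁ h₂)⟩
  · rintro ⟨x, rfl⟩
    exact ⟨x, rfl, rfl, rfl⟩

theorem Tcirc_eq_range (t1 : ∀ x, τ 2 (τ 1 (τ 0 x)) = x) (t3 : ∀ i : Fin 3, ∀ x : Γ, τ i x ≠ x) :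
    Tcirc τ = Set.range (circPt τ) := by
  ext ρ
  constructor
  · rintro ⟨x, _, _, -, -, -, rfl, rfl, -, h₀, h₁, h₂⟩
    exact ⟨x, Prod.ext h₀ (Prod.ext h₁ h₂)⟩
  · rintro ⟨x, rfl⟩
    have hx : x ≠ τ 1 (τ 0 x) := fun h => t3 2 x ((congrArg (τ 2) h).trans (t1 x))
    exact ⟨x, _, _, (t3 0 x).symm, (t3 1 _).symm, hx, rfl, rfl, t1 x, rfl, rfl, rfl⟩

theorem circCorner_bijective (r : Fin 3) : Bijective (circCorner τ r) := by
  fin_cases r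
  exacts [(τ 1).bijective.comp (τ 0).bijective, bijective_id, (τ 0).bijective]

theorem agree2_circPt_starPt_circCorner (t1 : ∀ x, τ 2 (τ 1 (τ 0 x)) = x) (r : Fin 3) (x : Γ) :
    Agree2 r (circPt τ x) (starPt τ (circCorner τ r x)) := by
  fin_cases r
  · exact ⟨Quotient.sound (Perm.sameCycle_apply_right.mpr (.refl _ _)), rfl⟩
  · refine ⟨rfl, Quotient.sound ?_⟩
    have h := Perm.sameCycle_apply_right.mpr (Perm.SameCycle.refl (τ 2) (τ 1 (τ 0 x)))
    rwa [t1] at h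
  · exact ⟨Quotient.sound (Perm.sameCycle_apply_right.mpr (.refl _ _)), rfl⟩

theorem eq_of_agree2_starPt
    (t2 : ∀ i j : Fin 3, i < j → ∀ x y : Γ, x ≠ y →
      ¬((τ i).SameCycle x y ∧ (τ j).SameCycle x y))
    {r : Fin 3} {x y : Γ} (h : Agree2 r (starPt τ x) (starPt τ y)) : x = y := by
  have meet : ∀ i j : Fin 3, i < j → (τ i).SameCycle x y → (τ j).SameCycle x y → x = y :=
    fun i j hij hi hj => not_not.mp fun hxy => t2 i j hij x y hxy ⟨hi, hj⟩
  fin_cases r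
  · exact meet 1 2 (by decide) (Quotient.exact h.1) (Quotient.exact h.2)
  · exact meet 0 2 (by decide) (Quotient.exact h.1) (Quotient.exact h.2)
  · exact meet 0 1 (by decide) (Quotient.exact h.1) (Quotient.exact h.2)

theorem eq_of_agree2_circPt (t1 : ∀ x, τ 2 (τ 1 (τ 0 x)) = x)
    (t2 : ∀ i j : Fin 3, i < j → ∀ x y : Γ, x ≠ y →
      ¬((τ i).SameCycle x y ∧ (τ j).SameCycle x y))
    {r : Fin 3} {x y : Γ} (h : Agree2 r (circPt τ x) (circPt τ y)) : x = y := by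
  have hcorner : Agree2 r (starPt τ (circCorner τ r x)) (starPt τ (circCorner τ r y)) :=
    (agree2_circPt_starPt_circCorner τ t1 r x).symm.trans
      (h.trans (agree2_circPt_starPt_circCorner τ t1 r y))
  exact (circCorner_bijective τ r).injective (eq_of_agree2_starPt τ t2 hcorner)

theorem starPt_ne_circPt (t1 : ∀ x, τ 2 (τ 1 (τ 0 x)) = x)
    (t2 : ∀ i j : Fin 3, i < j → ∀ x y : Γ, x ≠ y →
      ¬((τ i).SameCycle x y ∧ (τ j).SameCycle x y))
    (t3 : ∀ i : Fin 3, ∀ x : Γ, τ i x ≠ x) (x y : Γ) : starPt τ x ≠ circPt τ y := by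
  intro h
  have corner_eq (r : Fin 3) : x = circCorner τ r y :=
    eq_of_agree2_starPt τ t2 (h ▸ agree2_circPt_starPt_circCorner τ t1 r y)
  exact t3 0 y ((corner_eq 2).symm.trans (corner_eq 1))

end Construction

theorem construction_is_bitrade_general {Γ : Type*} (τ : Fin 3 → Equiv.Perm Γ)
    (t1 : ∀ x, τ 2 (τ 1 (τ 0 x)) = x)
    (t2 : ∀ i j : Fin 3, i < j → ∀ x y : Γ, x ≠ y →
      ¬((τ i).SameCycle x y ∧ (τ j).SameCycle x y))
    (t3 : ∀ i : Fin 3, ∀ x : Γ, τ i x ≠ x) :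
    IsBitrade (Tstar τ) (Tcirc τ) := by
  rw [Tstar_eq_range, Tcirc_eq_range τ t1 t3]
  have pls₁ : IsPLS (Set.range (starPt τ)) :=
    isPLS_range fun _ _ _ h => congrArg _ (eq_of_agree2_starPt τ t2 h)
  have pls₂ : IsPLS (Set.range (circPt τ)) :=
    isPLS_range fun _ _ _ h => congrArg _ (eq_of_agree2_circPt τ t1 t2 h)
  refine ⟨pls₁, pls₂, ?_, ?_, ?_⟩
  · rw [Set.eq_empty_iff_forall_notMem]
    rintro _ ⟨⟨x, rfl⟩, y, hy⟩
    exact starPt_ne_circPt τ t1 t2 t3 x y hy.symm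
  · rintro _ ⟨x, rfl⟩ r
    obtain ⟨y, rfl⟩ := (circCorner_bijective τ r).surjective x
    exact pls₂.existsUnique_of_exists
      ⟨_, ⟨y, rfl⟩, (agree2_circPt_starPt_circCorner τ t1 r y).symm⟩
  · rintro _ ⟨y, rfl⟩ r
    exact pls₁.existsUnique_of_exists ⟨_, ⟨_, rfl⟩, agree2_circPt_starPt_circCorner τ t1 r y⟩

/-- If `τ₁, τ₂, τ₃` are permutations of a finite set `Γ` satisfying
(T1) `τ₁τ₂τ₃ = 1` (left-to-right), (T2) any cycle of `τ_i` and any cycle of `τ_j`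
(`i < j`) move at most one common point, and (T3) each `τ_i` is fixed-point-free,
then the pair `(T⊛, T⊚)` built from the cycles of the `τ_i` is a latin bitrade. -/
theorem construction_is_bitrade {Γ : Type*} [Finite Γ] (τ : Fin 3 → Equiv.Perm Γ)
    (t1 : ∀ x, τ 2 (τ 1 (τ 0 x)) = x)
    (t2 : ∀ i j : Fin 3, i < j → ∀ x y : Γ, x ≠ y →
      ¬((τ i).SameCycle x y ∧ (τ j).SameCycle x y))
    (t3 : ∀ i : Fin 3, ∀ x : Γ, τ i x ≠ x) :
    IsBitrade (Tstar τ) (Tcirc τ) :=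
  construction_is_bitrade_general τ t1 t2 t3
end
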